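/- arXiv:1904.08802 — 2 statements merged into one kernel-verified Lean document; each statement's English description precedes it below -/
import Mathlib

section
/- Let C be cocomplete and cowellpowered with an (E,M)-factorisation system in which E consists of epimorphisms, let Σ be a varietor on C preserving E-cointersections, and let A = (Q,δ,i,o) be a Σ-tree automaton with o ∈ E. Then A is minimal if and only if A is simple and reachable. -/
/-!
A quotient `q : A ↠ B` of a minimal automaton `A` is again reachable with the same language, so
minimality yields `h : B → A`; then `q ≫ h = 𝟙`, since homomorphisms out of a reachable automaton
are unique, and `q` is invertible. Conversely, let `A` be simple and reachable and `B` reachable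
with the same language. The wide pushout of `rch_A` and `rch_B` (a cointersection of `E`-quotients)
is preserved by `Σ`, hence is a `Σ`-algebra, and with the common language as output it is an
automaton of which both legs are quotient automata. Simplicity of `A` makes the leg out of `A`
invertible, and composing the leg out of `B` with its inverse gives the homomorphism `B → A`.
-/

open CategoryTheory CategoryTheory.Limits

universe v u

namespace TreeAutPaper

variable {C : Type u} [Category.{v} C]

/-- A representative of a quotient of `X` lying in the class `E`:
an epimorphism out of `X` belonging to `E`. -/
structure EQuot (E : MorphismProperty C) (X : C) where
  obj : C
  hom : X ⟶ obj
  epi : Epi hom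
  mem : E hom

/-- The order on quotients: `q ≤ r` iff `r = h ∘ q` for some `h`. -/
def EQuot.le {E : MorphismProperty C} {X : C} (q r : EQuot E X) : Prop :=
  ∃ h : q.obj ⟶ r.obj, q.hom ≫ h = r.hom

/-- Two quotient representatives are equivalent when each is below the other. -/
def EQuot.equiv {E : MorphismProperty C} {X : C} (q r : EQuot E X) : Prop :=
  q.le r ∧ r.le q

/-- `C` is cowellpowered: quotients (epimorphisms out of an object, up to equivalence)
of every object form a set (an essentially `v`-small collection). -/
def Cowellpowered (C : Type u) [Category.{v} C] : Prop :=
  ∀ X : C, Small.{v} (Quot (fun q r : EQuot (⊤ : MorphismProperty C) X => EQuot.equiv q r))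

/-- An `(E,M)`-factorisation system: both classes are closed under composition with
isomorphisms, every morphism factors as an `E`-morphism followed by an `M`-morphism, and
we have a unique diagonal fill-in property. -/
structure IsFactorizationSystem (E M : MorphismProperty C) : Prop where
  respectsIso_E : E.RespectsIso
  respectsIso_M : M.RespectsIso
  factor : ∀ {X Y : C} (f : X ⟶ Y), ∃ (Z : C) (e : X ⟶ Z) (m : Z ⟶ Y), E e ∧ M m ∧ e ≫ m = f
  diag : ∀ {A B X Y : C} (e : A ⟶ B) (m : X ⟶ Y) (f : A ⟶ X) (g : B ⟶ Y),
    E e → M m → f ≫ m = e ≫ g → ∃! d : B ⟶ X, e ≫ d = f ∧ d ≫ m = g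

/-- `S` preserves `E`-cointersections, i.e. wide pushouts of families of epimorphisms
lying in `E`. -/
def PreservesECointersections (E : MorphismProperty C) (S : C ⥤ C) : Prop :=
  ∀ (J : Type (max u v)) (X : C) (objs : J → C) (arrows : ∀ j : J, X ⟶ objs j),
    (∀ j, E (arrows j)) → (∀ j, Epi (arrows j)) →
    ∀ c : Cocone (WidePushoutShape.wideSpan X objs arrows),
      Nonempty (IsColimit c) → Nonempty (IsColimit (S.mapCocone c))

/-- `f : ΣX ⟶ Y` factors through (the image under `Σ` of) the quotient `q`. -/
def FactorsThru {E : MorphismProperty C} (S : C ⥤ C) {X Y : C} (f : S.obj X ⟶ Y)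
    (q : EQuot E X) : Prop :=
  ∃ g : S.obj q.obj ⟶ Y, S.map q.hom ≫ g = f

/-- `q` is the `E`-cobase of `f : ΣX ⟶ Y`: the greatest quotient of `X` in `E`
through whose `Σ`-image `f` factors. -/
def IsCobase (E : MorphismProperty C) (S : C ⥤ C) {X Y : C} (f : S.obj X ⟶ Y)
    (q : EQuot E X) : Prop :=
  FactorsThru S f q ∧ ∀ r : EQuot E X, FactorsThru S f r → r.le q

variable (Sg : C ⥤ C)

/-- A `Σ`-tree automaton over input object `I` and output object `O`. -/
structure TreeAut (I O : C) where
  Q : Endofunctor.Algebra Sg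
  i : I ⟶ Q.a
  o : Q.a ⟶ O

variable {Sg} {I O : C}

/-- `h` is a homomorphism of automata from `A` to `B`. -/
structure IsAutHom (A B : TreeAut Sg I O) (h : A.Q.a ⟶ B.Q.a) : Prop where
  alg : Sg.map h ≫ B.Q.str = A.Q.str ≫ h
  hi : A.i ≫ h = B.i
  ho : h ≫ B.o = A.o

/-- `(B, q)` is a quotient automaton of `A`: `q` is an epimorphism lying in `E`
which is a homomorphism of automata. -/
structure IsQuotAut (E : MorphismProperty C) (A B : TreeAut Sg I O)
    (q : A.Q.a ⟶ B.Q.a) : Prop where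
  isHom : IsAutHom A B q
  epi : Epi q
  mem : E q

/-- `(M, qm)` is the minimisation of `A`: a quotient automaton through which every
quotient automaton of `A` factors by a (necessarily unique) automaton homomorphism. -/
def IsMinimisation (E : MorphismProperty C) (A M : TreeAut Sg I O)
    (qm : A.Q.a ⟶ M.Q.a) : Prop :=
  IsQuotAut E A M qm ∧
    ∀ (B : TreeAut Sg I O) (q' : A.Q.a ⟶ B.Q.a), IsQuotAut E A B q' →
      ∃! h : B.Q.a ⟶ M.Q.a, IsAutHom B M h ∧ q' ≫ h = qm

/-- `A` is simple: every quotient automaton of `A` has its quotient map an isomorphism. -/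
def IsSimple (E : MorphismProperty C) (A : TreeAut Sg I O) : Prop :=
  ∀ (B : TreeAut Sg I O) (q : A.Q.a ⟶ B.Q.a), IsQuotAut E A B q → IsIso q

section Varietor

variable (Fr : C ⥤ Endofunctor.Algebra Sg) (adj : Fr ⊣ Endofunctor.Algebra.forget Sg)

/-- The reachability map of an automaton: the underlying morphism of the adjoint
transpose of the initial-state assignment. -/
def rch (A : TreeAut Sg I O) : (Fr.obj I).a ⟶ A.Q.a :=
  ((adj.homEquiv I A.Q).symm A.i).f

/-- The language of an automaton. -/
def lang (A : TreeAut Sg I O) : (Fr.obj I).a ⟶ O :=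
  rch Fr adj A ≫ A.o

/-- The automaton `(Σ◇I, α_I, η_I, L)` on the free `Σ`-algebra over `I`. -/
def freeAut (L : (Fr.obj I).a ⟶ O) : TreeAut Sg I O :=
  { Q := Fr.obj I
    i := adj.unit.app I
    o := L }

/-- `A` is reachable: its reachability map lies in `E`. -/
def Reachable (E : MorphismProperty C) (A : TreeAut Sg I O) : Prop :=
  E (rch Fr adj A)

/-- `A` is minimal: reachable, and every reachable automaton with the same language
admits a (necessarily unique) automaton homomorphism into `A`. -/
def Minimal (E : MorphismProperty C) (A : TreeAut Sg I O) : Prop :=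
  Reachable Fr adj E A ∧
    ∀ B : TreeAut Sg I O, Reachable Fr adj E B → lang Fr adj B = lang Fr adj A →
      ∃! h : B.Q.a ⟶ A.Q.a, IsAutHom B A h

end Varietor

open Category

section FactorizationSystem

variable {E M : MorphismProperty C}

lemma IsFactorizationSystem.hasLiftingProperty (hfs : IsFactorizationSystem E M)
    {A B X Y : C} {e : A ⟶ B} {m : X ⟶ Y} (he : E e) (hm : M m) : HasLiftingProperty e m where
  sq_hasLift {f g} sq := by
    obtain ⟨d, ⟨hd₁, hd₂⟩, -⟩ := hfs.diag e m f g he hm sq.w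
    exact CommSq.HasLift.mk' ⟨d, hd₁, hd₂⟩

/-- Factor `f = e ≫ m`; a lift in the square `(e, f, m, 𝟙)` is a section of `m`, and uniqueness
of diagonals makes it an inverse. -/
lemma IsFactorizationSystem.mem_of_mem_llp (hfs : IsFactorizationSystem E M)
    {X Y : C} {f : X ⟶ Y} (hf : M.llp f) : E f := by
  obtain ⟨Z, e, m, he, hm, rfl⟩ := hfs.factor f
  have := hf _ hm
  have sq : CommSq e (e ≫ m) m (𝟙 Y) := ⟨(comp_id _).symm⟩
  obtain ⟨d, -, huniq⟩ := hfs.diag e m e m he hm rfl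
  have hsplit : m ≫ sq.lift = 𝟙 Z :=
    (huniq _ ⟨by rw [← assoc, sq.fac_left], by rw [assoc, sq.fac_right, comp_id]⟩).trans
      (huniq _ ⟨comp_id e, id_comp m⟩).symm
  have : IsIso m := ⟨sq.lift, hsplit, sq.fac_right⟩
  have := hfs.respectsIso_E
  exact MorphismProperty.RespectsIso.postcomp E m e he

lemma IsFactorizationSystem.llp_eq (hfs : IsFactorizationSystem E M) : M.llp = E :=
  le_antisymm (fun _ _ _ hf => hfs.mem_of_mem_llp hf)
    (fun _ _ _ he _ _ _ hm => hfs.hasLiftingProperty he hm)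

lemma IsFactorizationSystem.comp_mem (hfs : IsFactorizationSystem E M) {X Y Z : C}
    {f : X ⟶ Y} {g : Y ⟶ Z} (hf : E f) (hg : E g) : E (f ≫ g) := by
  rw [← hfs.llp_eq] at hf hg ⊢
  exact M.llp.comp_mem f g hf hg

end FactorizationSystem

lemma widePushout_ι_mem_llp (T : MorphismProperty C) {J : Type*} {X : C} {Y : J → C}
    (f : ∀ j, X ⟶ Y j) [HasWidePushout X Y f] (hf : ∀ j, T.llp (f j)) (j₀ : J) [Epi (f j₀)] :
    T.llp (WidePushout.ι f j₀) := by
  intro Z W m hm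
  have := fun k => hf k _ hm
  refine ⟨fun {u v} sq => ?_⟩
  have sq' : ∀ k, CommSq (f j₀ ≫ u) (f k) m (WidePushout.ι f k ≫ v) := fun k =>
    ⟨by rw [assoc, sq.w, WidePushout.arrow_ι_assoc, WidePushout.arrow_ι_assoc]⟩
  have hlift : (sq' j₀).lift = u := (cancel_epi (f j₀)).1 (sq' j₀).fac_left
  exact CommSq.HasLift.mk'
    ⟨WidePushout.desc (f j₀ ≫ u) (fun k => (sq' k).lift) (fun k => (sq' k).fac_left),
      by rw [WidePushout.ι_desc, hlift],
      WidePushout.hom_ext _ _ _ (fun k => by rw [WidePushout.ι_desc_assoc, (sq' k).fac_right])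
        (by rw [WidePushout.head_desc_assoc, assoc, sq.w, WidePushout.arrow_ι_assoc])⟩

section WidePushoutAlgebra

variable {J : Type*} {X : Endofunctor.Algebra Sg} {Y : J → Endofunctor.Algebra Sg}
  (f : ∀ j, X ⟶ Y j) [HasWidePushout X.a (fun j => (Y j).a) (fun j => (f j).f)]
  (hcolim : IsColimit (Sg.mapCocone
    (colimit.cocone (WidePushoutShape.wideSpan X.a (fun j => (Y j).a) (fun j => (f j).f)))))

noncomputable def widePushoutAlgebra : Endofunctor.Algebra Sg where
  a := widePushout X.a (fun j => (Y j).a) (fun j => (f j).f)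
  str := hcolim.desc (WidePushoutShape.mkCocone (X.str ≫ WidePushout.head _)
    (fun j => (Y j).str ≫ WidePushout.ι (fun j => (f j).f) j)
    (fun j => by
      have h : Sg.map (f j).f ≫ (Y j).str ≫ WidePushout.ι (fun j => (f j).f) j =
          X.str ≫ WidePushout.head _ := by
        rw [← assoc, (f j).h, assoc]
        exact congrArg (X.str ≫ ·) (WidePushout.arrow_ι (fun j => (f j).f) j)
      exact h))

noncomputable def widePushoutAlgebra.ι (j : J) : Y j ⟶ widePushoutAlgebra f hcolim where
  f := WidePushout.ι (fun j => (f j).f) j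
  h := hcolim.fac _ (some j)

noncomputable def widePushoutAlgebra.head : X ⟶ widePushoutAlgebra f hcolim where
  f := WidePushout.head (fun j => (f j).f)
  h := hcolim.fac _ none

lemma widePushoutAlgebra.arrow_ι (j : J) :
    f j ≫ widePushoutAlgebra.ι f hcolim j = widePushoutAlgebra.head f hcolim :=
  Endofunctor.Algebra.Hom.ext (WidePushout.arrow_ι (fun j => (f j).f) j)

end WidePushoutAlgebra

lemma IsAutHom.id (A : TreeAut Sg I O) : IsAutHom A A (𝟙 A.Q.a) :=
  ⟨by rw [Sg.map_id, id_comp, comp_id], comp_id _, id_comp _⟩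

lemma IsAutHom.comp {A B D : TreeAut Sg I O} {g : A.Q.a ⟶ B.Q.a} {h : B.Q.a ⟶ D.Q.a}
    (hg : IsAutHom A B g) (hh : IsAutHom B D h) : IsAutHom A D (g ≫ h) :=
  ⟨by rw [Sg.map_comp, assoc, hh.alg, ← assoc, hg.alg, assoc],
    by rw [← assoc, hg.hi, hh.hi], by rw [assoc, hh.ho, hg.ho]⟩

lemma IsAutHom.inv {A B : TreeAut Sg I O} {h : A.Q.a ⟶ B.Q.a} [IsIso h] (hh : IsAutHom A B h) :
    IsAutHom B A (inv h) :=
  ⟨by rw [Functor.map_inv, IsIso.inv_comp_eq, ← assoc, hh.alg, assoc, IsIso.hom_inv_id, comp_id],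
    by rw [← hh.hi, assoc, IsIso.hom_inv_id, comp_id], by rw [IsIso.inv_comp_eq, hh.ho]⟩

section Reachability

variable (Fr : C ⥤ Endofunctor.Algebra Sg) (adj : Fr ⊣ Endofunctor.Algebra.forget Sg)

def rchHom (A : TreeAut Sg I O) : Fr.obj I ⟶ A.Q :=
  (adj.homEquiv I A.Q).symm A.i

lemma rch_comp {A B : TreeAut Sg I O} (g : A.Q ⟶ B.Q) (hi : A.i ≫ g.f = B.i) :
    rch Fr adj A ≫ g.f = rch Fr adj B := by
  rw [rch, rch, ← hi]
  exact congrArg Endofunctor.Algebra.Hom.f (adj.homEquiv_naturality_right_symm A.i g).symm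

lemma IsAutHom.lang_eq {A B : TreeAut Sg I O} {h : A.Q.a ⟶ B.Q.a} (hh : IsAutHom A B h) :
    lang Fr adj A = lang Fr adj B := by
  rw [lang, lang, ← rch_comp Fr adj ⟨h, hh.alg⟩ hh.hi, assoc, hh.ho]

lemma IsAutHom.ext_of_epi_rch {A B : TreeAut Sg I O} [Epi (rch Fr adj A)]
    {g h : A.Q.a ⟶ B.Q.a} (hg : IsAutHom A B g) (hh : IsAutHom A B h) : g = h :=
  (cancel_epi (rch Fr adj A)).1 <|
    (rch_comp Fr adj ⟨g, hg.alg⟩ hg.hi).trans (rch_comp Fr adj ⟨h, hh.alg⟩ hh.hi).symm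

lemma Reachable.of_isQuotAut {E M : MorphismProperty C} (hfs : IsFactorizationSystem E M)
    {A B : TreeAut Sg I O} {q : A.Q.a ⟶ B.Q.a} (hA : Reachable Fr adj E A)
    (hq : IsQuotAut E A B q) : Reachable Fr adj E B := by
  rw [Reachable, ← rch_comp Fr adj ⟨q, hq.isHom.alg⟩ hq.isHom.hi]
  exact hfs.comp_mem hA hq.mem

end Reachability

section Cointersection

variable (Fr : C ⥤ Endofunctor.Algebra Sg) (adj : Fr ⊣ Endofunctor.Algebra.forget Sg)
  {J : Type*} (B : J → TreeAut Sg I O)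
  [HasWidePushout (Fr.obj I).a (fun j => (B j).Q.a) (fun j => (rchHom Fr adj (B j)).f)]
  (hcolim : IsColimit (Sg.mapCocone (colimit.cocone (WidePushoutShape.wideSpan (Fr.obj I).a
    (fun j => (B j).Q.a) (fun j => (rchHom Fr adj (B j)).f)))))
  {L : (Fr.obj I).a ⟶ O} (hL : ∀ j, lang Fr adj (B j) = L)

noncomputable def cointersection : TreeAut Sg I O where
  Q := widePushoutAlgebra (X := Fr.obj I) (Y := fun j => (B j).Q) (fun j => rchHom Fr adj (B j))
    hcolim
  i := adj.homEquiv I _ (widePushoutAlgebra.head _ hcolim)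
  o := WidePushout.desc L (fun j => (B j).o) hL

lemma isQuotAut_cointersection {E M : MorphismProperty C} (hfs : IsFactorizationSystem E M)
    (hE : ∀ ⦃X Y : C⦄ (f : X ⟶ Y), E f → Epi f) (hB : ∀ j, Reachable Fr adj E (B j)) (j : J) :
    IsQuotAut E (B j) (cointersection Fr adj B hcolim hL)
      (WidePushout.ι (fun j => (rchHom Fr adj (B j)).f) j) := by
  have hι : E (WidePushout.ι (fun j => (rchHom Fr adj (B j)).f) j) := by
    have : Epi (rchHom Fr adj (B j)).f := hE _ (hB j)
    rw [← hfs.llp_eq] at hB ⊢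
    exact widePushout_ι_mem_llp M (fun j => (rchHom Fr adj (B j)).f) hB j
  refine ⟨⟨(widePushoutAlgebra.ι _ hcolim j).h, ?_, WidePushout.ι_desc _ _ _ _ j⟩, hE _ hι, hι⟩
  -- the initial state is the transpose of `head = rchHom (B j) ≫ ι j`
  have h := adj.homEquiv_naturality_right (rchHom Fr adj (B j)) (widePushoutAlgebra.ι _ hcolim j)
  have ha := widePushoutAlgebra.arrow_ι (fun j => rchHom Fr adj (B j)) hcolim j
  rw [ha, rchHom] at h
  exact (h.trans (congrArg (· ≫ _) ((adj.homEquiv I (B j).Q).apply_symm_apply _))).symm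

end Cointersection

section Minimality

variable (Fr : C ⥤ Endofunctor.Algebra Sg) (adj : Fr ⊣ Endofunctor.Algebra.forget Sg)
  {E M : MorphismProperty C}

lemma Minimal.isSimple (hfs : IsFactorizationSystem E M) {A : TreeAut Sg I O}
    (hA : Minimal Fr adj E A) : IsSimple E A := by
  intro B q hq
  obtain ⟨h, hh, -⟩ := hA.2 B (hA.1.of_isQuotAut Fr adj hfs hq) (hq.isHom.lang_eq Fr adj).symm
  have hqh : q ≫ h = 𝟙 A.Q.a := (hA.2 A hA.1 rfl).unique (hq.isHom.comp hh) (IsAutHom.id A)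
  have : Epi q := hq.epi
  exact ⟨h, hqh, by rw [← cancel_epi q, ← assoc, hqh, id_comp, comp_id]⟩

lemma exists_isAutHom_of_isSimple [HasColimits C] (hfs : IsFactorizationSystem E M)
    (hE : ∀ ⦃X Y : C⦄ (f : X ⟶ Y), E f → Epi f)
    (hpres : PreservesECointersections E Sg) {A B : TreeAut Sg I O} (hA : IsSimple E A)
    (hAr : Reachable Fr adj E A) (hBr : Reachable Fr adj E B)
    (hL : lang Fr adj B = lang Fr adj A) : ∃ h, IsAutHom B A h := by
  let P : ULift.{max u v} Bool → TreeAut Sg I O := fun j => cond j.down A B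
  have hPr : ∀ j, Reachable Fr adj E (P j) := fun ⟨b⟩ => by cases b <;> assumption
  have hPL : ∀ j, lang Fr adj (P j) = lang Fr adj A := fun ⟨b⟩ => by cases b <;> simp [P, hL]
  have : HasColimitsOfShape (WidePushoutShape (ULift.{max u v} Bool)) C :=
    hasColimitsOfShape_of_equivalence (WidePushoutShape.equivalenceOfEquiv _ Equiv.ulift.symm)
  obtain ⟨hcolim⟩ := hpres _ _ _ _ hPr (fun j => hE _ (hPr j)) _ ⟨colimit.isColimit _⟩
  have hqA := isQuotAut_cointersection Fr adj P hcolim hPL hfs hE hPr ⟨true⟩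
  have hqB := isQuotAut_cointersection Fr adj P hcolim hPL hfs hE hPr ⟨false⟩
  have := hA _ _ hqA
  exact ⟨_, hqB.isHom.comp hqA.isHom.inv⟩

end Minimality

theorem minimal_iff_simple_and_reachable_general
    {C : Type u} [Category.{v} C] [HasColimits C]
    (E M : MorphismProperty C) (hfs : IsFactorizationSystem E M)
    (hE : ∀ ⦃X Y : C⦄ (f : X ⟶ Y), E f → Epi f)
    {Sg : C ⥤ C} (Fr : C ⥤ Endofunctor.Algebra Sg)
    (adj : Fr ⊣ Endofunctor.Algebra.forget Sg)
    (hpres : PreservesECointersections E Sg)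
    {I O : C} (A : TreeAut Sg I O) :
    Minimal Fr adj E A ↔ IsSimple E A ∧ Reachable Fr adj E A := by
  refine ⟨fun hA => ⟨hA.isSimple Fr adj hfs, hA.1⟩, fun ⟨hsimple, hreach⟩ => ⟨hreach, ?_⟩⟩
  intro B hB hL
  obtain ⟨h, hh⟩ := exists_isAutHom_of_isSimple Fr adj hfs hE hpres hsimple hreach hB hL
  have : Epi (rch Fr adj B) := hE _ hB
  exact ⟨h, hh, fun h' hh' => hh'.ext_of_epi_rch Fr adj hh⟩

/-- Let `Σ` be a varietor preserving `E`-cointersections and let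
`A = (Q,δ,i,o)` be a `Σ`-tree automaton with `o ∈ E`. Then `A` is minimal iff `A` is
simple and reachable. -/
theorem minimal_iff_simple_and_reachable
    {C : Type u} [Category.{v} C] [HasColimits C] (hcwp : Cowellpowered C)
    (E M : MorphismProperty C) (hfs : IsFactorizationSystem E M)
    (hE : ∀ ⦃X Y : C⦄ (f : X ⟶ Y), E f → Epi f)
    {Sg : C ⥤ C} (Fr : C ⥤ Endofunctor.Algebra Sg)
    (adj : Fr ⊣ Endofunctor.Algebra.forget Sg)
    (hpres : PreservesECointersections E Sg)
    {I O : C} (A : TreeAut Sg I O) (hoE : E A.o) :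
    Minimal Fr adj E A ↔ IsSimple E A ∧ Reachable Fr adj E A :=
  minimal_iff_simple_and_reachable_general E M hfs hE Fr adj hpres A

end TreeAutPaper
end

section
/- Let C be cocomplete and cowellpowered with an (E,M)-factorisation system in which E consists of epimorphisms, and suppose Σ : C → C preserves E-cointersections. For every Σ-algebra (Q,δ), the assignment sending q ∈ Quot_E(Q) to Θ_δ(q), the E-cobase of q∘δ, is a well-defined monotone operator Θ_δ : Quot_E(Q) → Quot_E(Q) on the complete lattice Quot_E(Q). -/
open CategoryTheory CategoryTheory.Limits

universe v u

namespace TreeAutPaper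

variable {C : Type u} [Category.{v} C]

variable (Sg : C ⥤ C)

variable {Sg} {I O : C}

namespace EQuot

variable {E : MorphismProperty C} {X : C}

lemma le_refl (q : EQuot E X) : q.le q :=
  ⟨𝟙 _, Category.comp_id _⟩

lemma le_trans {q r s : EQuot E X} (hqr : q.le r) (hrs : r.le s) : q.le s := by
  obtain ⟨h, hh⟩ := hqr
  obtain ⟨k, hk⟩ := hrs
  exact ⟨h ≫ k, by rw [← Category.assoc, hh, hk]⟩

lemma equiv_equivalence : Equivalence (EQuot.equiv : EQuot E X → EQuot E X → Prop) where
  refl q := ⟨q.le_refl, q.le_refl⟩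
  symm h := ⟨h.2, h.1⟩
  trans h h' := ⟨le_trans h.1 h'.1, le_trans h'.2 h.2⟩

def toTop (q : EQuot E X) : EQuot (⊤ : MorphismProperty C) X :=
  ⟨q.obj, q.hom, q.epi, trivial⟩

end EQuot

lemma Cowellpowered.exists_small_cofinal (hcwp : Cowellpowered C) {E : MorphismProperty C}
    {X : C} (P : EQuot E X → Prop) :
    ∃ (J : Type v) (ρ : J → EQuot E X), (∀ j, P (ρ j)) ∧ ∀ r, P r → ∃ j, r.le (ρ j) := by
  have := hcwp X
  let ψ : {r // P r} → Shrink.{v} (Quot (EQuot.equiv (E := ⊤) (X := X))) :=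
    fun r => equivShrink _ (Quot.mk _ r.1.toTop)
  refine ⟨Set.range ψ, fun k => k.2.choose.1, fun k => k.2.choose.2, fun r hr => ?_⟩
  let k : Set.range ψ := ⟨ψ ⟨r, hr⟩, ⟨r, hr⟩, rfl⟩
  refine ⟨k, ?_⟩
  have hmk : Quot.mk _ k.2.choose.1.toTop = Quot.mk _ r.toTop :=
    (equivShrink _).injective k.2.choose_spec
  exact (EQuot.equiv_equivalence.eqvGen_iff.mp (Quot.eqvGen_exact hmk)).2

lemma IsFactorizationSystem.mem_of_isColimit_wideSpan {E M : MorphismProperty C}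
    (hfs : IsFactorizationSystem E M) {J : Type*} {X : C} {objs : J → C}
    {arrows : ∀ j, X ⟶ objs j} (harrows : ∀ j, E (arrows j))
    {c : Cocone (WidePushoutShape.wideSpan X objs arrows)} (hc : IsColimit c) :
    E (c.ι.app none) := by
  obtain ⟨Z, e, m, he, hm, hem⟩ : ∃ (Z : C) (e : X ⟶ Z) (m : Z ⟶ c.pt),
      E e ∧ M m ∧ e ≫ m = c.ι.app none :=
    hfs.factor _
  have hleg : ∀ j, arrows j ≫ c.ι.app (some j) = c.ι.app none :=
    fun j => c.w (WidePushoutShape.Hom.init j)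
  -- each leg of `c` admits a diagonal into the `E`-part `Z` of the base leg
  choose d hd using fun j => (hfs.diag (arrows j) m e (c.ι.app (some j)) (harrows j) hm
    (by rw [hem, hleg])).exists
  let u : c.pt ⟶ Z := hc.desc (WidePushoutShape.mkCocone e d fun j => (hd j).1)
  have hu : c.ι.app none ≫ u = e := hc.fac _ none
  have hum : u ≫ m = 𝟙 c.pt := by
    refine hc.hom_ext fun j => ?_
    rcases j with _ | j
    · rw [← Category.assoc, hu]
      exact hem.trans (Category.comp_id _).symm
    · have huj : c.ι.app (some j) ≫ u = d j := hc.fac _ (some j)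
      rw [← Category.assoc, huj, Category.comp_id]
      exact (hd j).2
  -- both `m ≫ u` and `𝟙` are diagonals of the square `e ≫ m = e ≫ m`
  have hmu : m ≫ u = 𝟙 Z :=
    (hfs.diag e m e m he hm rfl).unique
      ⟨by rw [← Category.assoc, hem]; exact hu, by rw [Category.assoc, hum, Category.comp_id]⟩
      ⟨Category.comp_id _, Category.id_comp _⟩
  have : IsIso m := ⟨u, hmu, hum⟩
  have := hfs.respectsIso_E
  rw [← hem]
  exact MorphismProperty.RespectsIso.postcomp E m e he

lemma exists_comp_eq_of_isColimit_mapCocone {D : Type*} [Category D] (S : C ⥤ D) {J : Type*}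
    {X : C} {objs : J → C} {arrows : ∀ j, X ⟶ objs j}
    {c : Cocone (WidePushoutShape.wideSpan X objs arrows)} (hc : IsColimit (S.mapCocone c))
    {Y : D} {f : S.obj X ⟶ Y} (hf : ∀ j, ∃ g : S.obj (objs j) ⟶ Y, S.map (arrows j) ≫ g = f) :
    ∃ g : S.obj c.pt ⟶ Y, S.map (c.ι.app none) ≫ g = f := by
  choose g hg using hf
  exact ⟨hc.desc (WidePushoutShape.mkCocone (F := _ ⋙ S) f g hg), hc.fac _ none⟩

/-- The cobase is the cointersection of a small cofinal family of the quotients through which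
`f` factors; `Σ` preserving it makes `f` factor through it as well. -/
lemma exists_isCobase [HasColimits C] (hcwp : Cowellpowered C) {E M : MorphismProperty C}
    (hfs : IsFactorizationSystem E M) (hE : ∀ ⦃X Y : C⦄ (f : X ⟶ Y), E f → Epi f)
    {Sg : C ⥤ C} (hpres : PreservesECointersections E Sg) {X Y : C} (f : Sg.obj X ⟶ Y) :
    ∃ t : EQuot E X, IsCobase E Sg f t := by
  obtain ⟨J₀, ρ, hρ, hcofinal⟩ := hcwp.exists_small_cofinal (FactorsThru (E := E) Sg f)
  -- `PreservesECointersections` speaks about index types in `Type (max u v)`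
  let J := ULift.{u} J₀
  have : HasColimitsOfShape (WidePushoutShape J) C :=
    hasColimitsOfShape_of_equivalence (WidePushoutShape.equivalenceOfEquiv _ Equiv.ulift.symm)
  let arrows : ∀ j : J, X ⟶ (ρ j.down).obj := fun j => (ρ j.down).hom
  let c := colimit.cocone (WidePushoutShape.wideSpan X _ arrows)
  have hleg_mem : E (c.ι.app none) :=
    hfs.mem_of_isColimit_wideSpan (fun j => (ρ j.down).mem) (colimit.isColimit _)
  obtain ⟨hSc⟩ := hpres J X _ arrows (fun j => (ρ j.down).mem) (fun j => (ρ j.down).epi) c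
    ⟨colimit.isColimit _⟩
  refine ⟨⟨c.pt, c.ι.app none, hE _ hleg_mem, hleg_mem⟩,
    exists_comp_eq_of_isColimit_mapCocone Sg hSc fun j => hρ j.down, fun r hr => ?_⟩
  obtain ⟨j, hj⟩ := hcofinal r hr
  exact EQuot.le_trans hj ⟨c.ι.app (some ⟨j⟩), c.w (WidePushoutShape.Hom.init (⟨j⟩ : J))⟩

namespace IsCobase

variable {E : MorphismProperty C} {S : C ⥤ C} {X Y : C}

lemma equiv {f : S.obj X ⟶ Y} {t t' : EQuot E X} (ht : IsCobase E S f t)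
    (ht' : IsCobase E S f t') : t.equiv t' :=
  ⟨ht'.2 t ht.1, ht.2 t' ht'.1⟩

lemma le_of_comp_eq {Y' : C} {f : S.obj X ⟶ Y} {f' : S.obj X ⟶ Y'} {t t' : EQuot E X}
    (ht : IsCobase E S f t) (ht' : IsCobase E S f' t') (h : Y ⟶ Y') (hf : f ≫ h = f') :
    t.le t' := by
  obtain ⟨g, hg⟩ := ht.1
  exact ht'.2 t ⟨g ≫ h, by rw [← Category.assoc, hg, hf]⟩

end IsCobase

/-- If `Σ` preserves `E`-cointersections then, for every `Σ`-algebra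
`(Q,δ)`, the assignment `q ↦ Θ_δ(q)` (the `E`-cobase of `q ∘ δ`) is a well-defined
monotone operator on the complete lattice `Quot_E(Q)`: the cobase of `q ∘ δ` exists for
every quotient `q`, it is unique up to the equivalence of quotients, and it is monotone
with respect to the quotient order. -/
theorem theta_well_defined_monotone
    {C : Type u} [Category.{v} C] [HasColimits C] (hcwp : Cowellpowered C)
    (E M : MorphismProperty C) (hfs : IsFactorizationSystem E M)
    (hE : ∀ ⦃X Y : C⦄ (f : X ⟶ Y), E f → Epi f)
    (Sg : C ⥤ C) (hpres : PreservesECointersections E Sg)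
    {Q : C} (δ : Sg.obj Q ⟶ Q) :
    -- Θ_δ is well defined: the cobase exists …
    (∀ q : EQuot E Q, ∃ t : EQuot E Q, IsCobase E Sg (δ ≫ q.hom) t) ∧
    -- … and is unique up to the equivalence of quotients, …
    (∀ (q t t' : EQuot E Q), IsCobase E Sg (δ ≫ q.hom) t →
      IsCobase E Sg (δ ≫ q.hom) t' → t.equiv t') ∧
    -- … and Θ_δ is monotone.
    (∀ (q q' t t' : EQuot E Q), IsCobase E Sg (δ ≫ q.hom) t →
      IsCobase E Sg (δ ≫ q'.hom) t' → q.le q' → t.le t') := by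
  refine ⟨fun q => exists_isCobase hcwp hfs hE hpres (δ ≫ q.hom),
    fun _ _ _ ht ht' => ht.equiv ht', ?_⟩
  rintro _ _ _ _ ht ht' ⟨h, hh⟩
  exact ht.le_of_comp_eq ht' h (by rw [Category.assoc, hh])

end TreeAutPaper
end
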